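/- arXiv:0801.1088 — 3 statements merged into one kernel-verified Lean document; each statement's English description precedes it below -/
import Mathlib

section
/- Let y be a nondegenerate L² map from D to ℝ^d. Then there is a unique polar factorization y = Y ∘ X, where Y belongs to the class C of maps with convex potential and X is a Lebesgue-measure-preserving map of D; in this decomposition Y coincides (almost everywhere) with the unique rearrangement y* of y in the class C. -/
open MeasureTheory Set

noncomputable section

/-- `D` is the closure of a bounded connected open set in `ℝ^d`, its boundary is
Lebesgue-negligible, and it has Lebesgue measure `1`. -/
def IsNiceDomain {d : ℕ} (D : Set (EuclideanSpace ℝ (Fin d))) : Prop :=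
  (∃ U : Set (EuclideanSpace ℝ (Fin d)),
      IsOpen U ∧ IsConnected U ∧ Bornology.IsBounded U ∧ D = closure U) ∧
  volume (frontier D) = 0 ∧ volume D = 1

/-- The map `y` belongs to the class `C` of maps with a convex potential. -/
def HasConvexPotential {d : ℕ} (D : Set (EuclideanSpace ℝ (Fin d)))
    (y : EuclideanSpace ℝ (Fin d) → EuclideanSpace ℝ (Fin d)) : Prop :=
  ∃ p : EuclideanSpace ℝ (Fin d) → EReal,
    LowerSemicontinuous p ∧
    (∀ x z : EuclideanSpace ℝ (Fin d), ∀ t : ℝ, 0 ≤ t → t ≤ 1 →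
      p (t • x + (1 - t) • z) ≤ (t : EReal) * p x + ((1 - t : ℝ) : EReal) * p z) ∧
    (∀ᵐ x ∂(volume.restrict D), ∃ f : EuclideanSpace ℝ (Fin d) → ℝ,
      (∀ᶠ z in nhds x, p z = (f z : EReal)) ∧ HasGradientAt f (y x) x)

/-- `y` is nondegenerate: preimages of Lebesgue-negligible sets are negligible (in `D`). -/
def Nondegenerate {d : ℕ} (D : Set (EuclideanSpace ℝ (Fin d)))
    (y : EuclideanSpace ℝ (Fin d) → EuclideanSpace ℝ (Fin d)) : Prop :=
  ∀ N : Set (EuclideanSpace ℝ (Fin d)), volume N = 0 → volume (y ⁻¹' N ∩ D) = 0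

/-- A (Borel) Lebesgue-measure-preserving map of `D`. -/
def MeasurePreservingMapOf {d : ℕ} (D : Set (EuclideanSpace ℝ (Fin d)))
    (X : EuclideanSpace ℝ (Fin d) → EuclideanSpace ℝ (Fin d)) : Prop :=
  Measurable X ∧ MapsTo X D D ∧
    Measure.map X (volume.restrict D) = volume.restrict D

/-!
Brenier's argument. Write `ys = ∇p` with `p` convex and let `q` be the Legendre transform of `p`.
At a point `x` where `p` is differentiable, Fenchel's equality `p x + q (∇p x) = ⟪x, ∇p x⟫`
holds, and `∇p x` is the unique maximizer of `⟪x, ·⟫ - q`. The conjugate `q` is convex, so the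
boundary of its domain is null and `q` is differentiable almost everywhere inside it. The
common law of `y` and `ys` does not charge null sets, hence `∇q (ys x) = x` for almost every `x`:
`X := ∇q ∘ y` preserves the measure and `ys ∘ X = y`.

Uniqueness: if `y = Y' ∘ X'`, then `Y'` has the law of `y`. Two maps with convex potentials and
the same law coincide, since each one maximizes `∫ ⟪x, u x⟫` among the maps `u` with that law,
and is its unique maximizer by the equality case of Fenchel–Young. Finally
`X' = ∇q ∘ ys ∘ X' = ∇q ∘ y = X`.
-/

open Filter
open scoped RealInnerProductSpace Topology

section FenchelConjugate

variable {E : Type*} [NormedAddCommGroup E] [InnerProductSpace ℝ E]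

/-- The Fenchel conjugate, with the supremum taken only over the points where `p` is finite,
so that no `⊤ - ⊤` arises in `EReal`. -/
def fenchelConj (p : E → EReal) (b : E) : EReal :=
  ⨆ (z : E) (c : ℝ) (_ : p z = c), ((⟪z, b⟫ - c : ℝ) : EReal)

def ERealConvex (p : E → EReal) : Prop :=
  ∀ x z : E, ∀ t : ℝ, 0 ≤ t → t ≤ 1 →
    p (t • x + (1 - t) • z) ≤ (t : EReal) * p x + ((1 - t : ℝ) : EReal) * p z

variable {p : E → EReal}

lemma le_fenchelConj {z : E} {c : ℝ} (hz : p z = c) (b : E) :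
    ((⟪z, b⟫ - c : ℝ) : EReal) ≤ fenchelConj p b :=
  le_iSup₂_of_le z c (le_iSup (fun _ : p z = c => ((⟪z, b⟫ - c : ℝ) : EReal)) hz)

lemma fenchelConj_le {b : E} {v : EReal}
    (h : ∀ z : E, ∀ c : ℝ, p z = c → ((⟪z, b⟫ - c : ℝ) : EReal) ≤ v) :
    fenchelConj p b ≤ v :=
  iSup₂_le fun z c => iSup_le (h z c)

lemma fenchelConj_ne_bot {z : E} {c : ℝ} (hz : p z = c) (b : E) : fenchelConj p b ≠ ⊥ :=
  ne_bot_of_le_ne_bot (EReal.coe_ne_bot _) (le_fenchelConj hz b)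

lemma lowerSemicontinuous_fenchelConj (p : E → EReal) : LowerSemicontinuous (fenchelConj p) :=
  lowerSemicontinuous_iSup fun _ => lowerSemicontinuous_iSup fun _ =>
    lowerSemicontinuous_iSup fun _ => (continuous_coe_real_ereal.comp
      ((continuous_const.inner continuous_id).sub continuous_const)).lowerSemicontinuous

lemma inner_le_add_toReal_fenchelConj {a b : E} {c : ℝ} (ha : p a = c)
    (hb : fenchelConj p b ≠ ⊤) : ⟪a, b⟫ ≤ c + (fenchelConj p b).toReal := by
  have := EReal.toReal_le_toReal (le_fenchelConj ha b) (EReal.coe_ne_bot _) hb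
  rw [EReal.toReal_coe] at this
  linarith

lemma fenchelConj_combo_le {b₁ b₂ : E} {v₁ v₂ t : ℝ}
    (h₁ : fenchelConj p b₁ ≤ v₁) (h₂ : fenchelConj p b₂ ≤ v₂) (ht₀ : 0 ≤ t) (ht₁ : t ≤ 1) :
    fenchelConj p (t • b₁ + (1 - t) • b₂) ≤ ((t * v₁ + (1 - t) * v₂ : ℝ) : EReal) := by
  refine fenchelConj_le fun z c hz => EReal.coe_le_coe_iff.2 ?_
  have e₁ := EReal.coe_le_coe_iff.1 ((le_fenchelConj hz b₁).trans h₁)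
  have e₂ := EReal.coe_le_coe_iff.1 ((le_fenchelConj hz b₂).trans h₂)
  rw [inner_add_right, real_inner_smul_right, real_inner_smul_right]
  nlinarith [mul_le_mul_of_nonneg_left e₁ ht₀, mul_le_mul_of_nonneg_left e₂ (sub_nonneg.2 ht₁)]

lemma convex_fenchelConj_ne_top (p : E → EReal) : Convex ℝ {b | fenchelConj p b ≠ ⊤} := by
  refine convex_iff_forall_pos.2 fun b₁ h₁ b₂ h₂ s t hs _ hst => ?_
  obtain rfl : t = 1 - s := by linarith
  exact ne_top_of_le_ne_top (EReal.coe_ne_top _)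
    (fenchelConj_combo_le (EReal.le_coe_toReal h₁) (EReal.le_coe_toReal h₂) hs.le (by linarith))

lemma convexOn_toReal_fenchelConj {z : E} {c : ℝ} (hz : p z = c) :
    ConvexOn ℝ {b | fenchelConj p b ≠ ⊤} fun b => (fenchelConj p b).toReal := by
  refine ⟨convex_fenchelConj_ne_top p, fun b₁ h₁ b₂ h₂ s t hs ht hst => ?_⟩
  obtain rfl : t = 1 - s := by linarith
  have := EReal.toReal_le_toReal
    (fenchelConj_combo_le (EReal.le_coe_toReal h₁) (EReal.le_coe_toReal h₂) hs (by linarith))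
    (fenchelConj_ne_bot hz _) (EReal.coe_ne_top _)
  rwa [EReal.toReal_coe] at this

end FenchelConjugate

lemma HasDerivAt.le_of_eventually_le_add_mul {φ : ℝ → ℝ} {φ' m x : ℝ} (hφ : HasDerivAt φ φ' x)
    (h : ∀ᶠ t in 𝓝[>] x, φ t ≤ φ x + (t - x) * m) : φ' ≤ m := by
  refine le_of_tendsto ((hasDerivAt_iff_tendsto_slope.1 hφ).mono_left (nhdsGT_le_nhdsNE x)) ?_
  filter_upwards [h, self_mem_nhdsWithin] with t ht (hxt : x < t)
  rw [slope_def_field, div_le_iff₀ (sub_pos.2 hxt)]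
  linarith

section LocalGradient

variable {E : Type*} [NormedAddCommGroup E] [InnerProductSpace ℝ E] [CompleteSpace E]

def HasLocalGradient (p : E → EReal) (g x : E) : Prop :=
  ∃ f : E → ℝ, (∀ᶠ z in 𝓝 x, p z = f z) ∧ HasGradientAt f g x

lemma HasGradientAt.eq_of_eventually_add_inner_le {F : E → ℝ} {x g v : E}
    (hF : HasGradientAt F g x) (h : ∀ᶠ z in 𝓝 x, F x + ⟪v, z - x⟫ ≤ F z) : v = g := by
  have hmin : IsLocalMin (fun z => F z - ⟪v, z⟫) x := by
    filter_upwards [h] with z hz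
    rw [inner_sub_right] at hz
    linarith
  have := hmin.hasFDerivAt_eq_zero
    (hF.hasFDerivAt.sub (InnerProductSpace.toDual ℝ E v).hasFDerivAt)
  exact (InnerProductSpace.toDual ℝ E).injective (sub_eq_zero.1 this).symm

variable {p : E → EReal}

lemma HasLocalGradient.coe_toReal {g x : E} (h : HasLocalGradient p g x) :
    p x = (p x).toReal := by
  obtain ⟨f, hf, -⟩ := h
  rw [hf.self_of_nhds, EReal.toReal_coe]

lemma ERealConvex.add_inner_le (hp : ERealConvex p) {a g z : E} {c : ℝ}
    (ha : HasLocalGradient p g a) (hz : p z = c) : (p a).toReal + ⟪g, z - a⟫ ≤ c := by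
  obtain ⟨f, hpf, hf⟩ := ha
  have hpa : p a = f a := hpf.self_of_nhds
  let ℓ : ℝ → E := fun t => a + t • (z - a)
  have hℓ0 : ℓ 0 = a := by simp [ℓ]
  have hℓ : HasDerivAt ℓ (z - a) 0 := by
    have := ((hasDerivAt_id (0 : ℝ)).smul_const (z - a)).const_add a
    rwa [one_smul] at this
  have hφ : HasDerivAt (f ∘ ℓ) ⟪g, z - a⟫ 0 := by
    rw [← hℓ0] at hf
    simpa using hf.hasFDerivAt.comp_hasDerivAt 0 hℓ
  have hpℓ : ∀ᶠ t in 𝓝 0, p (ℓ t) = f (ℓ t) := (hℓ0 ▸ hℓ.continuousAt.tendsto).eventually hpf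
  have hslope := hφ.le_of_eventually_le_add_mul (m := c - f a) <| by
    filter_upwards [eventually_nhdsWithin_of_eventually_nhds hpℓ,
      eventually_nhdsWithin_of_eventually_nhds (eventually_lt_nhds one_pos),
      self_mem_nhdsWithin] with t hpt ht₁ (ht₀ : 0 < t)
    have hconv := hp z a t ht₀.le ht₁.le
    have hℓt : t • z + (1 - t) • a = ℓ t := by
      simp only [ℓ, smul_sub, sub_smul, one_smul]; abel
    rw [hz, hpa, hℓt, hpt, ← EReal.coe_mul, ← EReal.coe_mul, ← EReal.coe_add,
      EReal.coe_le_coe_iff] at hconv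
    simp only [Function.comp_apply, hℓ0, sub_zero]
    linarith
  rw [hpa, EReal.toReal_coe]
  linarith

lemma HasLocalGradient.fenchelConj_eq (hp : ERealConvex p) {a g : E}
    (ha : HasLocalGradient p g a) : fenchelConj p g = ((⟪a, g⟫ - (p a).toReal : ℝ) : EReal) := by
  refine le_antisymm (fenchelConj_le fun z c hz => EReal.coe_le_coe_iff.2 ?_)
    (le_fenchelConj ha.coe_toReal g)
  have := hp.add_inner_le ha hz
  rw [inner_sub_right] at this
  rw [real_inner_comm g z, real_inner_comm g a]
  linarith

lemma HasLocalGradient.inner_sub_toReal_fenchelConj_le (hp : ERealConvex p) {a g b : E}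
    (ha : HasLocalGradient p g a) (hb : fenchelConj p b ≠ ⊤) :
    ⟪a, b⟫ - (fenchelConj p b).toReal ≤ ⟪a, g⟫ - (fenchelConj p g).toReal := by
  rw [ha.fenchelConj_eq hp, EReal.toReal_coe]
  linarith [inner_le_add_toReal_fenchelConj ha.coe_toReal hb]

lemma HasLocalGradient.eq_of_inner_sub_toReal_fenchelConj_le (hp : ERealConvex p) {a g b : E}
    (ha : HasLocalGradient p g a) (hb : fenchelConj p b ≠ ⊤)
    (h : ⟪a, g⟫ - (fenchelConj p g).toReal ≤ ⟪a, b⟫ - (fenchelConj p b).toReal) : b = g := by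
  rw [ha.fenchelConj_eq hp, EReal.toReal_coe] at h
  obtain ⟨f, hpf, hf⟩ := ha
  rw [hpf.self_of_nhds, EReal.toReal_coe] at h
  refine hf.eq_of_eventually_add_inner_le ?_
  filter_upwards [hpf] with z hz
  have := inner_le_add_toReal_fenchelConj hz hb
  rw [inner_sub_right, real_inner_comm z b, real_inner_comm a b]
  linarith

end LocalGradient

section Rademacher

variable {E : Type*} [NormedAddCommGroup E] [NormedSpace ℝ E] [FiniteDimensional ℝ E]
  [MeasurableSpace E] [BorelSpace E] (μ : Measure E) [μ.IsAddHaarMeasure]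

theorem LocallyLipschitzOn.ae_differentiableAt_of_mem {F : Type*} [NormedAddCommGroup F]
    [NormedSpace ℝ F] [FiniteDimensional ℝ F] {s : Set E} {f : E → F} (hs : IsOpen s)
    (hf : LocallyLipschitzOn s f) : ∀ᵐ x ∂μ, x ∈ s → DifferentiableAt ℝ f x := by
  have hloc : ∀ x ∈ s, ∃ V ∈ 𝓝 x, ∀ᵐ y ∂μ, y ∈ V → DifferentiableAt ℝ f y := by
    intro x hx
    obtain ⟨K, t, ht, hK⟩ := hf hx
    obtain ⟨V, hVt, hV, hxV⟩ := mem_nhds_iff.1 (hs.nhdsWithin_eq hx ▸ ht)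
    exact ⟨V, hV.mem_nhds hxV, (hK.mono hVt).ae_differentiableWithinAt_of_mem.mono
      fun y hy hyV => (hy hyV).differentiableAt (hV.mem_nhds hyV)⟩
  refine ae_iff.2 (measure_null_of_locally_null _ fun x hx => ?_)
  obtain ⟨V, hV, hVdiff⟩ := hloc x (of_not_imp hx)
  refine ⟨{y | ¬(y ∈ s → DifferentiableAt ℝ f y)} ∩ V, inter_mem_nhdsWithin _ hV,
    measure_mono_null ?_ (ae_iff.1 hVdiff)⟩
  exact fun y hy hyV => hy.1 fun _ => hyV hy.2

theorem ConvexOn.ae_mem_interior_and_differentiableAt {s : Set E} {f : E → ℝ}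
    (hf : ConvexOn ℝ s f) : ∀ᵐ x ∂μ, x ∈ s → x ∈ interior s ∧ DifferentiableAt ℝ f x := by
  filter_upwards [measure_eq_zero_iff_ae_notMem.1 (hf.1.addHaar_frontier μ),
    hf.locallyLipschitzOn_interior.ae_differentiableAt_of_mem μ isOpen_interior]
    with x hfr hdiff hxs
  have hint : x ∈ interior s := by_contra fun h => hfr ⟨subset_closure hxs, h⟩
  exact ⟨hint, hdiff hint⟩

end Rademacher

section Transport

variable {α β : Type*} [MeasurableSpace α] [MeasurableSpace β] {μ : Measure α}

lemma ae_comp_of_map_eq {w u : α → β} (hw : Measurable w) (hu : Measurable u)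
    (hmap : μ.map w = μ.map u) {P : β → Prop} (hP : MeasurableSet {b | P b})
    (h : ∀ᵐ a ∂μ, P (w a)) : ∀ᵐ a ∂μ, P (u a) := by
  rw [← ae_map_iff hu.aemeasurable hP, ← hmap]
  exact (ae_map_iff hw.aemeasurable hP).2 h

lemma map_eq_of_ae_eq_comp {X : α → α} {Y : α → β} {y : α → β} (hY : Measurable Y)
    (hX : Measurable X) (hXmap : μ.map X = μ) (h : ∀ᵐ a ∂μ, y a = Y (X a)) :
    μ.map Y = μ.map y :=
  calc μ.map Y = (μ.map X).map Y := by rw [hXmap]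
    _ = μ.map (Y ∘ X) := Measure.map_map hY hX
    _ = μ.map y := Measure.map_congr (h.mono fun _ ha => ha.symm)

lemma MeasureTheory.MemLp.of_map_eq [NormedAddCommGroup β] [SecondCountableTopology β]
    [OpensMeasurableSpace β] {w u : α → β} {q : ENNReal} (hw : Measurable w) (hu : Measurable u)
    (hmap : μ.map w = μ.map u) (h : MemLp w q μ) : MemLp u q μ := by
  have := (memLp_map_measure_iff aestronglyMeasurable_id hw.aemeasurable).2 h
  rwa [hmap, memLp_map_measure_iff aestronglyMeasurable_id hu.aemeasurable] at this

lemma MeasureTheory.MemLp.integrable_inner {E : Type*} [NormedAddCommGroup E]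
    [InnerProductSpace ℝ E] {f g : α → E} (hf : MemLp f 2 μ) (hg : MemLp g 2 μ) :
    Integrable (fun a => ⟪f a, g a⟫) μ :=
  (L2.integrable_inner (𝕜 := ℝ) (hf.toLp f) (hg.toLp g)).congr <| by
    filter_upwards [hf.coeFn_toLp, hg.coeFn_toLp] with a h₁ h₂
    rw [h₁, h₂]

end Transport

section ConvexPotential

variable {E : Type*} [NormedAddCommGroup E] [InnerProductSpace ℝ E] [MeasurableSpace E]

structure IsConvexPotential [CompleteSpace E] (μ : Measure E) (p : E → EReal) (w : E → E) :
    Prop where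
  convex : ERealConvex p
  ae_hasLocalGradient : ∀ᵐ x ∂μ, HasLocalGradient p (w x) x

lemma HasConvexPotential.exists_isConvexPotential {d : ℕ} {D : Set (EuclideanSpace ℝ (Fin d))}
    {y : EuclideanSpace ℝ (Fin d) → EuclideanSpace ℝ (Fin d)} (h : HasConvexPotential D y) :
    ∃ p, IsConvexPotential (volume.restrict D) p y :=
  let ⟨p, _, hconv, hgrad⟩ := h
  ⟨p, hconv, hgrad⟩

lemma measurable_gradient [CompleteSpace E] [BorelSpace E] (f : E → ℝ) :
    Measurable (gradient f) :=
  (InnerProductSpace.toDual ℝ E).symm.continuous.measurable.comp (measurable_fderiv ℝ f)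

variable [CompleteSpace E] {μ : Measure E} {p : E → EReal} {w : E → E}

lemma IsConvexPotential.ae_fenchelConj_ne_top (hwp : IsConvexPotential μ p w) :
    ∀ᵐ x ∂μ, fenchelConj p (w x) ≠ ⊤ :=
  hwp.ae_hasLocalGradient.mono fun _ hx => by
    rw [hx.fenchelConj_eq hwp.convex]
    exact EReal.coe_ne_top _

theorem IsConvexPotential.ae_gradient_toReal_fenchelConj_eq [FiniteDimensional ℝ E]
    [BorelSpace E] (ν : Measure E) [ν.IsAddHaarMeasure] (hwp : IsConvexPotential μ p w)
    (hw : Measurable w) (hac : μ.map w ≪ ν) :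
    ∀ᵐ x ∂μ, gradient (fun b => (fenchelConj p b).toReal) (w x) = x := by
  rcases eq_or_ne μ 0 with rfl | hμ
  · simp
  have := ae_neBot.2 hμ
  obtain ⟨x₀, hx₀⟩ := hwp.ae_hasLocalGradient.exists
  have hreg : ∀ᵐ x ∂μ, w x ∈ interior {b | fenchelConj p b ≠ ⊤} ∧
      DifferentiableAt ℝ (fun b => (fenchelConj p b).toReal) (w x) := by
    filter_upwards [ae_of_ae_map hw.aemeasurable (hac.ae_le
      ((convexOn_toReal_fenchelConj hx₀.coe_toReal).ae_mem_interior_and_differentiableAt ν)),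
      hwp.ae_fenchelConj_ne_top] with x hx hfin
    exact hx hfin
  filter_upwards [hreg, hwp.ae_hasLocalGradient] with x ⟨hint, hdiff⟩ hgx
  refine (hdiff.hasGradientAt.eq_of_eventually_add_inner_le ?_).symm
  filter_upwards [isOpen_interior.mem_nhds hint] with b hb
  have := hgx.inner_sub_toReal_fenchelConj_le hwp.convex (interior_subset hb)
  rw [inner_sub_right]
  linarith

lemma IsConvexPotential.integrable_toReal_fenchelConj [OpensMeasurableSpace E]
    [IsFiniteMeasure μ] (hwp : IsConvexPotential μ p w)
    (hid : MemLp id 2 μ) (hw : Measurable w) (hwL2 : MemLp w 2 μ) :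
    Integrable (fun x => (fenchelConj p (w x)).toReal) μ := by
  rcases eq_or_ne μ 0 with rfl | hμ
  · exact integrable_zero_measure
  have := ae_neBot.2 hμ
  obtain ⟨x₀, hx₀⟩ := hwp.ae_hasLocalGradient.exists
  refine integrable_of_le_of_le (g₁ := fun x => ⟪x₀, w x⟫ - (p x₀).toReal)
    (g₂ := fun x => ⟪x, w x⟫ - ⟪w x₀, x - x₀⟫ - (p x₀).toReal)
    ((lowerSemicontinuous_fenchelConj p).measurable.ereal_toReal.comp hw).aestronglyMeasurable
    ?_ ?_ ?_ ?_
  · filter_upwards [hwp.ae_fenchelConj_ne_top] with x hx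
    linarith [inner_le_add_toReal_fenchelConj hx₀.coe_toReal hx]
  · filter_upwards [hwp.ae_hasLocalGradient] with x hx
    rw [hx.fenchelConj_eq hwp.convex, EReal.toReal_coe]
    linarith [hwp.convex.add_inner_le hx₀ hx.coe_toReal]
  · exact ((hwL2.integrable one_le_two).const_inner x₀).sub (integrable_const _)
  · exact ((hid.integrable_inner hwL2).sub (((hid.integrable one_le_two).sub
      (integrable_const x₀)).const_inner (w x₀))).sub (integrable_const _)

theorem IsConvexPotential.ae_eq_of_map_eq_of_integral_inner_le [OpensMeasurableSpace E]
    [SecondCountableTopology E] [IsFiniteMeasure μ] (hwp : IsConvexPotential μ p w)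
    (hid : MemLp id 2 μ) {u : E → E} (hw : Measurable w) (hu : Measurable u)
    (hmap : μ.map w = μ.map u) (hwL2 : MemLp w 2 μ)
    (hle : ∫ x, ⟪x, w x⟫ ∂μ ≤ ∫ x, ⟪x, u x⟫ ∂μ) : u =ᵐ[μ] w := by
  set S : E → ℝ := fun b => (fenchelConj p b).toReal
  have hS : Measurable S := (lowerSemicontinuous_fenchelConj p).measurable.ereal_toReal
  have hSw : Integrable (fun x => S (w x)) μ := hwp.integrable_toReal_fenchelConj hid hw hwL2
  have hSu : Integrable (fun x => S (u x)) μ := by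
    have := (integrable_map_measure hS.aestronglyMeasurable hw.aemeasurable).2 hSw
    rwa [hmap, integrable_map_measure hS.aestronglyMeasurable hu.aemeasurable] at this
  have hSeq : ∫ x, S (u x) ∂μ = ∫ x, S (w x) ∂μ := by
    rw [← integral_map hu.aemeasurable hS.aestronglyMeasurable, ← hmap,
      integral_map hw.aemeasurable hS.aestronglyMeasurable]
  have hIw : Integrable (fun x => ⟪x, w x⟫) μ := hid.integrable_inner hwL2
  have hIu : Integrable (fun x => ⟪x, u x⟫) μ := hid.integrable_inner (hwL2.of_map_eq hw hu hmap)
  have hfin : ∀ᵐ x ∂μ, fenchelConj p (u x) ≠ ⊤ :=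
    ae_comp_of_map_eq hw hu hmap
      ((lowerSemicontinuous_fenchelConj p).measurable (measurableSet_singleton ⊤)).compl
      hwp.ae_fenchelConj_ne_top
  let gap : E → ℝ := fun x => ⟪x, w x⟫ - S (w x) - (⟪x, u x⟫ - S (u x))
  have hgap_nonneg : 0 ≤ᵐ[μ] gap := by
    filter_upwards [hwp.ae_hasLocalGradient, hfin] with x hx hux
    have := hx.inner_sub_toReal_fenchelConj_le hwp.convex hux
    simp only [Pi.zero_apply, gap]
    linarith
  have hgap_int : Integrable gap μ := (hIw.sub hSw).sub (hIu.sub hSu)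
  have hgap_zero : gap =ᵐ[μ] 0 := by
    refine (integral_eq_zero_iff_of_nonneg_ae hgap_nonneg hgap_int).1
      (le_antisymm ?_ (integral_nonneg_of_ae hgap_nonneg))
    have hIw' : Integrable (fun x => ⟪x, w x⟫ - S (w x)) μ := hIw.sub hSw
    have hIu' : Integrable (fun x => ⟪x, u x⟫ - S (u x)) μ := hIu.sub hSu
    simp only [gap]
    rw [integral_sub hIw' hIu', integral_sub hIw hSw, integral_sub hIu hSu, hSeq]
    linarith
  filter_upwards [hwp.ae_hasLocalGradient, hfin, hgap_zero] with x hx hux hx0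
  exact hx.eq_of_inner_sub_toReal_fenchelConj_le hwp.convex hux <| by
    simp only [gap, Pi.zero_apply] at hx0
    linarith

theorem IsConvexPotential.ae_eq_of_map_eq [OpensMeasurableSpace E] [SecondCountableTopology E]
    [IsFiniteMeasure μ] (hid : MemLp id 2 μ) {p' : E → EReal} {w' : E → E}
    (hwp : IsConvexPotential μ p w) (hwp' : IsConvexPotential μ p' w') (hw : Measurable w)
    (hw' : Measurable w') (hmap : μ.map w = μ.map w') (hwL2 : MemLp w 2 μ) : w =ᵐ[μ] w' := by
  rcases le_total (∫ x, ⟪x, w x⟫ ∂μ) (∫ x, ⟪x, w' x⟫ ∂μ) with h | h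
  · exact (hwp.ae_eq_of_map_eq_of_integral_inner_le hid hw hw' hmap hwL2 h).symm
  · exact hwp'.ae_eq_of_map_eq_of_integral_inner_le hid hw' hw hmap.symm
      (hwL2.of_map_eq hw hw' hmap) h

theorem IsConvexPotential.exists_measurePreserving_factorization [FiniteDimensional ℝ E]
    [BorelSpace E] (ν : Measure E) [ν.IsAddHaarMeasure] {D : Set E} (hD : MeasurableSet D)
    (hDne : D.Nonempty) (hμD : ∀ᵐ x ∂μ, x ∈ D) (hwp : IsConvexPotential μ p w) {y : E → E}
    (hw : Measurable w) (hy : Measurable y) (hmap : μ.map w = μ.map y) (hac : μ.map y ≪ ν) :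
    ∃ X : E → E, Measurable X ∧ MapsTo X D D ∧ μ.map X = μ ∧ (∀ᵐ x ∂μ, y x = w (X x)) ∧
      ∀ X' : E → E, Measurable X' → μ.map X' = μ → (∀ᵐ x ∂μ, y x = w (X' x)) →
        X' =ᵐ[μ] X := by
  classical
  obtain ⟨x₀, hx₀⟩ := hDne
  set G₀ := gradient fun b => (fenchelConj p b).toReal
  let G : E → E := fun b => if G₀ b ∈ D then G₀ b else x₀
  have hG : Measurable G :=
    Measurable.ite (measurable_gradient _ hD) (measurable_gradient _) measurable_const
  have hGD : ∀ b, G b ∈ D := fun b => by by_cases h : G₀ b ∈ D <;> simp [G, h, hx₀]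
  have hGw : ∀ᵐ x ∂μ, G (w x) = x := by
    filter_upwards [hwp.ae_gradient_toReal_fenchelConj_eq ν hw (hmap ▸ hac), hμD] with x h hx
    simp only [G, G₀, h, hx, if_true]
  have hwG : ∀ᵐ x ∂μ, w (G (y x)) = y x :=
    ae_comp_of_map_eq hw hy hmap (measurableSet_eq_fun (hw.comp hG) measurable_id)
      (hGw.mono fun x hx => show w (G (w x)) = w x by rw [hx])
  refine ⟨G ∘ y, hG.comp hy, fun x _ => hGD (y x), ?_, hwG.mono fun x hx => hx.symm, ?_⟩
  · calc μ.map (G ∘ y) = (μ.map y).map G := (Measure.map_map hG hy).symm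
      _ = μ.map (G ∘ w) := by rw [← hmap, Measure.map_map hG hw]
      _ = μ.map id := Measure.map_congr hGw
      _ = μ := Measure.map_id
  · intro X' hX' hX'map hyX'
    filter_upwards [ae_of_ae_map hX'.aemeasurable (hX'map.symm ▸ hGw), hyX'] with x hGx hyx
    rw [Function.comp_apply, hyx, hGx]

end ConvexPotential

section Domain

variable {d : ℕ} {D : Set (EuclideanSpace ℝ (Fin d))}

lemma IsNiceDomain.measurableSet (hD : IsNiceDomain D) : MeasurableSet D := by
  obtain ⟨⟨U, -, -, -, rfl⟩, -⟩ := hD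
  exact isClosed_closure.measurableSet

lemma IsNiceDomain.isBounded (hD : IsNiceDomain D) : Bornology.IsBounded D := by
  obtain ⟨⟨U, -, -, hU, rfl⟩, -⟩ := hD
  exact hU.closure

lemma IsNiceDomain.nonempty (hD : IsNiceDomain D) : D.Nonempty :=
  nonempty_of_measure_ne_zero (hD.2.2 ▸ one_ne_zero)

lemma IsNiceDomain.isFiniteMeasure (hD : IsNiceDomain D) :
    IsFiniteMeasure (volume.restrict D) :=
  isFiniteMeasure_restrict.2 (hD.2.2 ▸ ENNReal.one_ne_top)

lemma IsNiceDomain.memLp_id (hD : IsNiceDomain D) : MemLp id 2 (volume.restrict D) := by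
  have := hD.isFiniteMeasure
  obtain ⟨R, hR⟩ := hD.isBounded.exists_norm_le
  exact .of_bound aestronglyMeasurable_id R
    ((ae_restrict_mem hD.measurableSet).mono fun x hx => hR x hx)

lemma Nondegenerate.map_absolutelyContinuous
    {y : EuclideanSpace ℝ (Fin d) → EuclideanSpace ℝ (Fin d)} (h : Nondegenerate D y)
    (hy : Measurable y) : (volume.restrict D).map y ≪ volume :=
  Measure.AbsolutelyContinuous.mk fun s hs hs0 => by
    rw [Measure.map_apply hy hs, Measure.restrict_apply (hy hs)]
    exact h s hs0

end Domain

/-- **Polar factorization of maps (Brenier).**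
A nondegenerate `L²` map `y : D → ℝ^d` admits a factorization `y = Y ∘ X` with `Y` in the
class `C` of maps with convex potential and `X` a Lebesgue-measure-preserving map of `D`;
this factorization is unique up to a.e. equality, and `Y` coincides a.e. with the unique
rearrangement `y*` of `y` in the class `C`. -/
theorem polar_factorization
    {d : ℕ} (D : Set (EuclideanSpace ℝ (Fin d))) (hD : IsNiceDomain D)
    (y : EuclideanSpace ℝ (Fin d) → EuclideanSpace ℝ (Fin d))
    (hy : Measurable y) (hyL2 : MemLp y 2 (volume.restrict D))
    (hynd : Nondegenerate D y)
    -- `ys = y*` : the unique rearrangement of `y` in the class `C`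
    (ys : EuclideanSpace ℝ (Fin d) → EuclideanSpace ℝ (Fin d))
    (hysm : Measurable ys) (hysC : HasConvexPotential D ys)
    (hysr : Measure.map ys (volume.restrict D) = Measure.map y (volume.restrict D)) :
    ∃ Y X : EuclideanSpace ℝ (Fin d) → EuclideanSpace ℝ (Fin d),
      Measurable Y ∧ HasConvexPotential D Y ∧ MeasurePreservingMapOf D X ∧
      (∀ᵐ a ∂(volume.restrict D), y a = Y (X a)) ∧
      -- `Y` coincides a.e. with `y*`
      Y =ᵐ[volume.restrict D] ys ∧
      -- uniqueness of the polar factorization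
      (∀ Y' X' : EuclideanSpace ℝ (Fin d) → EuclideanSpace ℝ (Fin d),
        Measurable Y' → HasConvexPotential D Y' → MeasurePreservingMapOf D X' →
        (∀ᵐ a ∂(volume.restrict D), y a = Y' (X' a)) →
        Y' =ᵐ[volume.restrict D] Y ∧ X' =ᵐ[volume.restrict D] X) := by
  have := hD.isFiniteMeasure
  obtain ⟨p, hp⟩ := hysC.exists_isConvexPotential
  obtain ⟨X, hXm, hXD, hXmap, hyX, hX_unique⟩ := hp.exists_measurePreserving_factorization
    volume hD.measurableSet hD.nonempty (ae_restrict_mem hD.measurableSet) hysm hy hysr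
    (hynd.map_absolutelyContinuous hy)
  refine ⟨ys, X, hysm, hysC, ⟨hXm, hXD, hXmap⟩, hyX, .rfl, ?_⟩
  rintro Y' X' hY'm hY'C ⟨hX'm, -, hX'map⟩ hyX'
  obtain ⟨p', hp'⟩ := hY'C.exists_isConvexPotential
  have hY'map := map_eq_of_ae_eq_comp hY'm hX'm hX'map hyX'
  have hY' : Y' =ᵐ[volume.restrict D] ys := hp'.ae_eq_of_map_eq hD.memLp_id hp hY'm hysm
    (hY'map.trans hysr.symm) (hyL2.of_map_eq hy hY'm hY'map.symm)
  refine ⟨hY', hX_unique X' hX'm hX'map ?_⟩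
  filter_upwards [hyX', ae_of_ae_map hX'm.aemeasurable (hX'map.symm ▸ hY')] with x h₁ h₂
  rw [h₁, h₂]
end
end

section
/- Let y be a nondegenerate L² map from D to ℝ^d with polar factorization y = y* ∘ X, where y* has a convex potential and X is a Lebesgue-measure-preserving map of D. Then X can be written X(a) = (∇Φ)(y(a)) for Lebesgue-almost-every a ∈ D, where Φ is a convex Lipschitz-continuous function defined on all of ℝ^d. -/
open MeasureTheory Set

noncomputable section

/-!
Take for `Φ` the Legendre transform of the potential `p` of `y*` restricted to `D`: the
supremum of the affine maps `x ↦ ⟪x, w⟫ - p w` over `w ∈ D` with `p w` finite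
(`affineSup` of the graph of `p` over `D`). As `D` is bounded, `Φ` is finite, convex and
Lipschitz. For a.e. `a`, `y a = ∇p (X a)` is a subgradient of the convex function `p` at
`X a`, so the Fenchel–Young equality `Φ (y a) = ⟪y a, X a⟫ - p (X a)` holds and `X a` is a
subgradient of `Φ` at `y a`. By Rademacher's theorem `Φ` is differentiable off a null set,
whose preimage under the nondegenerate `y` is null, and at a point of differentiability the
gradient is the only subgradient.
-/

open Filter
open scoped NNReal RealInnerProductSpace Topology Gradient

variable {E : Type*} [NormedAddCommGroup E] [InnerProductSpace ℝ E]

theorem HasGradientAt.inner_le_of_eventually_le [CompleteSpace E] {f : E → ℝ} {v x u : E}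
    {c : ℝ} (hf : HasGradientAt f v x) (h : ∀ᶠ t in 𝓝[>] (0 : ℝ), f (x + t • u) ≤ f x + t * c) :
    ⟪v, u⟫ ≤ c := by
  have hline : HasLineDerivAt ℝ f ⟪v, u⟫ x u := by
    simpa using hf.hasFDerivAt.hasLineDerivAt u
  refine le_of_tendsto hline.tendsto_slope_zero_right ?_
  filter_upwards [h, self_mem_nhdsWithin] with t ht (htpos : 0 < t)
  rw [smul_eq_mul, inv_mul_le_iff₀ htpos]
  linarith

theorem HasGradientAt.eq_of_forall_add_inner_le [CompleteSpace E] {f : E → ℝ} {v w x : E}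
    (hf : HasGradientAt f v x) (hw : ∀ z, f x + ⟪w, z - x⟫ ≤ f z) : v = w := by
  have hmin : IsLocalMin (fun z => f z - ⟪w, z⟫) x :=
    Eventually.of_forall fun z => by
      have := hw z
      rw [inner_sub_right] at this
      dsimp only
      linarith
  have hzero := hmin.hasFDerivAt_eq_zero (hf.hasFDerivAt.sub (innerSL ℝ w).hasFDerivAt)
  refine ext_inner_right ℝ fun u => ?_
  have := congrArg (fun L : E →L[ℝ] ℝ => L u) hzero
  simpa [sub_eq_zero] using this

theorem coe_add_inner_le_of_convex_of_eventuallyEq [CompleteSpace E] {p : E → EReal}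
    (hp : ∀ x z : E, ∀ t : ℝ, 0 ≤ t → t ≤ 1 →
      p (t • x + (1 - t) • z) ≤ (t : EReal) * p x + ((1 - t : ℝ) : EReal) * p z)
    {f : E → ℝ} {v x₀ : E} (hf : ∀ᶠ z in 𝓝 x₀, p z = (f z : EReal))
    (hv : HasGradientAt f v x₀) (z : E) :
    ((f x₀ + ⟪v, z - x₀⟫ : ℝ) : EReal) ≤ p z := by
  refine EReal.le_of_forall_lt_iff_le.1 fun c hc => EReal.coe_le_coe_iff.2 ?_
  suffices ⟪v, z - x₀⟫ ≤ c - f x₀ by linarith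
  have hpath : Tendsto (fun t : ℝ => x₀ + t • (z - x₀)) (𝓝[>] 0) (𝓝 x₀) := by
    refine tendsto_nhdsWithin_of_tendsto_nhds ?_
    have : Continuous fun t : ℝ => x₀ + t • (z - x₀) := by fun_prop
    simpa using this.tendsto 0
  refine hv.inner_le_of_eventually_le ?_
  filter_upwards [hpath.eventually hf, Ioo_mem_nhdsGT (zero_lt_one' ℝ)] with t hft ht
  have hseg : t • z + (1 - t) • x₀ = x₀ + t • (z - x₀) := by
    rw [smul_sub, sub_smul, one_smul]; abel
  have hconv := hp z x₀ t ht.1.le ht.2.le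
  rw [hseg, hft, hf.self_of_nhds] at hconv
  have hle : (t : EReal) * p z ≤ (t : EReal) * c :=
    mul_le_mul_of_nonneg_left hc.le (EReal.coe_nonneg.2 ht.1.le)
  have := hconv.trans (add_le_add_left hle _)
  rw [← EReal.coe_mul, ← EReal.coe_mul, ← EReal.coe_add, EReal.coe_le_coe_iff] at this
  linarith

def affineSup (S : Set (E × ℝ)) (x : E) : ℝ :=
  sSup ((fun q : E × ℝ => ⟪x, q.1⟫ - q.2) '' S)

section affineSup

variable {S : Set (E × ℝ)}

theorem le_affineSup {x : E} (hbdd : BddAbove ((fun q : E × ℝ => ⟪x, q.1⟫ - q.2) '' S))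
    {q : E × ℝ} (hq : q ∈ S) : ⟪x, q.1⟫ - q.2 ≤ affineSup S x :=
  le_csSup hbdd (mem_image_of_mem _ hq)

theorem affineSup_le (hS : S.Nonempty) {x : E} {M : ℝ} (h : ∀ q ∈ S, ⟪x, q.1⟫ - q.2 ≤ M) :
    affineSup S x ≤ M :=
  csSup_le (hS.image _) (forall_mem_image.2 h)

theorem bddAbove_affine_image {R : ℝ} (hR : ∀ q ∈ S, ‖q.1‖ ≤ R) {x₀ w₀ : E} {s₀ : ℝ}
    (hsupp : ∀ q ∈ S, s₀ + ⟪x₀, q.1 - w₀⟫ ≤ q.2) (x : E) :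
    BddAbove ((fun q : E × ℝ => ⟪x, q.1⟫ - q.2) '' S) := by
  refine ⟨‖x - x₀‖ * R + (⟪x₀, w₀⟫ - s₀), forall_mem_image.2 fun q hq => ?_⟩
  have hslope : ⟪x - x₀, q.1⟫ ≤ ‖x - x₀‖ * R :=
    (real_inner_le_norm _ _).trans (mul_le_mul_of_nonneg_left (hR q hq) (norm_nonneg _))
  have := hsupp q hq
  rw [inner_sub_right] at this
  rw [inner_sub_left] at hslope
  linarith

theorem convexOn_affineSup (hS : S.Nonempty)
    (hbdd : ∀ x, BddAbove ((fun q : E × ℝ => ⟪x, q.1⟫ - q.2) '' S)) :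
    ConvexOn ℝ univ (affineSup S) := by
  refine ⟨convex_univ, fun x _ z _ a b ha hb hab => affineSup_le hS fun q hq => ?_⟩
  have hsplit : ⟪a • x + b • z, q.1⟫ - q.2 = a * (⟪x, q.1⟫ - q.2) + b * (⟪z, q.1⟫ - q.2) := by
    rw [inner_add_left, real_inner_smul_left, real_inner_smul_left]
    linear_combination q.2 * hab
  rw [hsplit]
  exact add_le_add (mul_le_mul_of_nonneg_left (le_affineSup (hbdd x) hq) ha)
    (mul_le_mul_of_nonneg_left (le_affineSup (hbdd z) hq) hb)

theorem lipschitzWith_affineSup (hS : S.Nonempty)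
    (hbdd : ∀ x, BddAbove ((fun q : E × ℝ => ⟪x, q.1⟫ - q.2) '' S)) {R : ℝ≥0}
    (hR : ∀ q ∈ S, ‖q.1‖ ≤ R) :
    LipschitzWith R (affineSup S) := by
  refine LipschitzWith.of_le_add_mul R fun x z => affineSup_le hS fun q hq => ?_
  have hslope : ⟪x - z, q.1⟫ ≤ R * dist x z := by
    rw [dist_eq_norm, mul_comm]
    exact (real_inner_le_norm _ _).trans (mul_le_mul_of_nonneg_left (hR q hq) (norm_nonneg _))
  rw [inner_sub_left] at hslope
  linarith [le_affineSup (hbdd z) hq]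

theorem affineSup_add_inner_le (hbdd : ∀ x, BddAbove ((fun q : E × ℝ => ⟪x, q.1⟫ - q.2) '' S))
    {x w : E} {s : ℝ} (hws : (w, s) ∈ S) (hsupp : ∀ q ∈ S, s + ⟪x, q.1 - w⟫ ≤ q.2) (z : E) :
    affineSup S x + ⟪w, z - x⟫ ≤ affineSup S z := by
  have hx : affineSup S x ≤ ⟪x, w⟫ - s := affineSup_le ⟨_, hws⟩ fun q hq => by
    have := hsupp q hq
    rw [inner_sub_right] at this
    linarith
  have hz := le_affineSup (hbdd z) hws
  rw [inner_sub_right, real_inner_comm z w, real_inner_comm x w]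
  dsimp only at hz
  linarith

end affineSup

theorem Nondegenerate.ae_comp {d : ℕ} {D : Set (EuclideanSpace ℝ (Fin d))}
    {y : EuclideanSpace ℝ (Fin d) → EuclideanSpace ℝ (Fin d)} (hy : Nondegenerate D y)
    (hD : MeasurableSet D) {P : EuclideanSpace ℝ (Fin d) → Prop} (hP : ∀ᵐ x, P x) :
    ∀ᵐ a ∂(volume.restrict D), P (y a) := by
  rw [ae_iff, Measure.restrict_apply' hD]
  exact hy _ (ae_iff.1 hP)

theorem polar_factor_is_gradient_general
    {d : ℕ} (D : Set (EuclideanSpace ℝ (Fin d))) (hD : IsNiceDomain D)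
    (y : EuclideanSpace ℝ (Fin d) → EuclideanSpace ℝ (Fin d))
    (hynd : Nondegenerate D y)
    -- `ys = y*` : the rearrangement of `y` with convex potential
    (ys : EuclideanSpace ℝ (Fin d) → EuclideanSpace ℝ (Fin d))
    (hysC : HasConvexPotential D ys)
    -- `X` : the measure-preserving factor of the polar factorization `y = y* ∘ X`
    (X : EuclideanSpace ℝ (Fin d) → EuclideanSpace ℝ (Fin d))
    (hX : MeasurePreservingMapOf D X)
    (hfact : ∀ᵐ a ∂(volume.restrict D), y a = ys (X a)) :
    ∃ Φ : EuclideanSpace ℝ (Fin d) → ℝ,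
      ConvexOn ℝ Set.univ Φ ∧ (∃ L : NNReal, LipschitzWith L Φ) ∧
      ∀ᵐ a ∂(volume.restrict D), HasGradientAt Φ (X a) (y a) := by
  obtain ⟨p, -, hpconv, hpgrad⟩ := hysC
  obtain ⟨⟨U, -, -, hUb, hDU⟩, -, hDvol⟩ := hD
  have hDm : MeasurableSet D := (hDU ▸ isClosed_closure : IsClosed D).measurableSet
  obtain ⟨C, hC⟩ := isBounded_iff_forall_norm_le.1 (hDU ▸ hUb.closure : Bornology.IsBounded D)
  set S : Set (EuclideanSpace ℝ (Fin d) × ℝ) := {q | q.1 ∈ D ∧ p q.1 = q.2}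
  have hR : ∀ q ∈ S, ‖q.1‖ ≤ C.toNNReal := fun q hq => (hC _ hq.1).trans (Real.le_coe_toNNReal C)
  have hsupp : ∀ᵐ a ∂(volume.restrict D),
      ∃ s, (X a, s) ∈ S ∧ ∀ q ∈ S, s + ⟪y a, q.1 - X a⟫ ≤ q.2 := by
    filter_upwards [ae_of_ae_map hX.1.aemeasurable (hX.2.2 ▸ hpgrad), hfact,
      ae_restrict_mem hDm] with a ⟨f, hfp, hfg⟩ hya haD
    refine ⟨f (X a), ⟨hX.2.1 haD, hfp.self_of_nhds⟩, fun q hq => ?_⟩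
    have := coe_add_inner_le_of_convex_of_eventuallyEq hpconv hfp (hya ▸ hfg) q.1
    rwa [hq.2, EReal.coe_le_coe_iff] at this
  have : (ae (volume.restrict D)).NeBot := by simp [ae_neBot, hDvol]
  obtain ⟨a₀, s₀, hS₀, hsupp₀⟩ := hsupp.exists
  have hbdd := bddAbove_affine_image hR hsupp₀
  have hlip := lipschitzWith_affineSup ⟨_, hS₀⟩ hbdd hR
  refine ⟨affineSup S, convexOn_affineSup ⟨_, hS₀⟩ hbdd, ⟨_, hlip⟩, ?_⟩
  filter_upwards [hsupp, hynd.ae_comp hDm hlip.ae_differentiableAt] with a ⟨s, hs, hsa⟩ hdiff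
  have hgrad := hdiff.hasGradientAt
  rwa [hgrad.eq_of_forall_add_inner_le (affineSup_add_inner_le hbdd hs hsa)] at hgrad

/-- **The measure-preserving factor is the gradient of a convex Lipschitz function
composed with `y`.**  If `y = y* ∘ X` is the polar factorization of the nondegenerate `L²`
map `y`, then `X(a) = (∇Φ)(y(a))` for a.e. `a ∈ D`, where `Φ` is a convex Lipschitz
function defined on all of `ℝ^d`. -/
theorem polar_factor_is_gradient
    {d : ℕ} (D : Set (EuclideanSpace ℝ (Fin d))) (hD : IsNiceDomain D)
    (y : EuclideanSpace ℝ (Fin d) → EuclideanSpace ℝ (Fin d))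
    (hy : Measurable y) (hyL2 : MemLp y 2 (volume.restrict D))
    (hynd : Nondegenerate D y)
    -- `ys = y*` : the rearrangement of `y` with convex potential
    (ys : EuclideanSpace ℝ (Fin d) → EuclideanSpace ℝ (Fin d))
    (hysm : Measurable ys) (hysC : HasConvexPotential D ys)
    (hysr : Measure.map ys (volume.restrict D) = Measure.map y (volume.restrict D))
    -- `X` : the measure-preserving factor of the polar factorization `y = y* ∘ X`
    (X : EuclideanSpace ℝ (Fin d) → EuclideanSpace ℝ (Fin d))
    (hX : MeasurePreservingMapOf D X)
    (hfact : ∀ᵐ a ∂(volume.restrict D), y a = ys (X a)) :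
    ∃ Φ : EuclideanSpace ℝ (Fin d) → ℝ,
      ConvexOn ℝ Set.univ Φ ∧ (∃ L : NNReal, LipschitzWith L Φ) ∧
      ∀ᵐ a ∂(volume.restrict D), HasGradientAt Φ (X a) (y a) :=
  polar_factor_is_gradient_general D hD y hynd ys hysC X hX hfact
end
end

section
/- Let α, β : ℝ → ℝ be differentiable with α ≥ 0, and define B : ℝ × ℝ → ℝ³ by B(t,s) = (α(t) cos s, α(t) sin s, β(t) − 1). Then B solves the cross-Burgers equation ∂_t B + ∂_s B × B = ∂²_{ss} B (where × is the cross product in ℝ³) if and only if α and β satisfy the ODE system dα/dt = −βα and dβ/dt = α². Moreover, when α > 0, setting λ = log α, this system is equivalent to the single second-order equation d²λ/dt² + e^{2λ} = 0. -/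
noncomputable section

private lemma cb_dt (α β : ℝ → ℝ) (hα : Differentiable ℝ α)
    (B : ℝ → ℝ → Fin 3 → ℝ)
    (hB : ∀ t s, B t s = ![α t * Real.cos s, α t * Real.sin s, β t - 1])
    (t s : ℝ) :
    (fun i => deriv (fun t' => B t' s i) t)
      = ![deriv α t * Real.cos s, deriv α t * Real.sin s, deriv β t] := by
  funext i
  fin_cases i
  · simp only [hB]
    show deriv (fun t' => α t' * Real.cos s) t = deriv α t * Real.cos s
    exact deriv_mul_const (hα t) _
  · simp only [hB]
    show deriv (fun t' => α t' * Real.sin s) t = deriv α t * Real.sin s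
    exact deriv_mul_const (hα t) _
  · simp only [hB]
    show deriv (fun t' => β t' - 1) t = deriv β t
    rw [deriv_sub_const]

private lemma cb_ds (α β : ℝ → ℝ) (B : ℝ → ℝ → Fin 3 → ℝ)
    (hB : ∀ t s, B t s = ![α t * Real.cos s, α t * Real.sin s, β t - 1])
    (t s : ℝ) :
    (fun i => deriv (fun s' => B t s' i) s)
      = ![-(α t * Real.sin s), α t * Real.cos s, 0] := by
  funext i
  fin_cases i
  · simp only [hB]
    show deriv (fun s' => α t * Real.cos s') s = -(α t * Real.sin s)
    simp [deriv_const_mul_field]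
  · simp only [hB]
    show deriv (fun s' => α t * Real.sin s') s = α t * Real.cos s
    simp [deriv_const_mul_field]
  · simp only [hB]
    show deriv (fun s' => β t - 1) s = 0
    simp

private lemma cb_dss (α β : ℝ → ℝ) (B : ℝ → ℝ → Fin 3 → ℝ)
    (hB : ∀ t s, B t s = ![α t * Real.cos s, α t * Real.sin s, β t - 1])
    (t s : ℝ) :
    (fun i => deriv (fun s' => deriv (fun s'' => B t s'' i) s') s)
      = ![-(α t * Real.cos s), -(α t * Real.sin s), 0] := by
  funext i
  fin_cases i
  · simp only [hB]
    show deriv (fun s' => deriv (fun s'' => α t * Real.cos s'') s') s = -(α t * Real.cos s)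
    simp [deriv_const_mul_field]
  · simp only [hB]
    show deriv (fun s' => deriv (fun s'' => α t * Real.sin s'') s') s = -(α t * Real.sin s)
    simp [deriv_const_mul_field]
  · simp only [hB]
    show deriv (fun s' => deriv (fun s'' => β t - 1) s') s = 0
    simp

/-- **Special solutions of the cross-Burgers equation.**
`B(t,s) = (α(t) cos s, α(t) sin s, β(t) − 1)` solves the cross-Burgers equation
`∂_t B + ∂_s B × B = ∂²_{ss} B` if and only if `α' = −βα` and `β' = α²`.  Moreover, when
`α > 0` and `λ = log α`, this system is equivalent to `λ'' + e^{2λ} = 0` (with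
`β = −λ'`). -/
theorem cross_burgers_special_solutions
    (α β : ℝ → ℝ) (hα : Differentiable ℝ α) (hβ : Differentiable ℝ β)
    (hαnn : ∀ t, 0 ≤ α t)
    (B : ℝ → ℝ → Fin 3 → ℝ)
    (hB : ∀ t s, B t s = ![α t * Real.cos s, α t * Real.sin s, β t - 1]) :
    -- the PDE is equivalent to the ODE system
    ((∀ t s : ℝ,
        (fun i => deriv (fun t' => B t' s i) t) +
          crossProduct (fun i => deriv (fun s' => B t s' i) s) (B t s) =
        fun i => deriv (fun s' => deriv (fun s'' => B t s'' i) s') s) ↔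
      (∀ t : ℝ, deriv α t = -(β t * α t) ∧ deriv β t = α t ^ 2)) ∧
    -- and, for positive `α`, the ODE system is equivalent to `λ'' + e^{2λ} = 0`
    ((∀ t, 0 < α t) →
      ((∀ t : ℝ, deriv α t = -(β t * α t) ∧ deriv β t = α t ^ 2) ↔
        (∀ t : ℝ, β t = -deriv (fun u => Real.log (α u)) t ∧
          deriv (deriv (fun u => Real.log (α u))) t + Real.exp (2 * Real.log (α t)) = 0))) := by
  constructor
  · -- Part 1: PDE ↔ ODE system
    constructor
    · intro h t
      have H := h t 0
      rw [cb_dt α β hα B hB, cb_ds α β B hB, cb_dss α β B hB, hB, cross_apply] at H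
      have H0 := congrFun H 0
      have H2 := congrFun H 2
      simp [Real.cos_zero, Real.sin_zero] at H0 H2
      constructor
      · nlinarith [H0]
      · nlinarith [H2]
    · intro h t s
      rw [cb_dt α β hα B hB, cb_ds α β B hB, cb_dss α β B hB, hB, cross_apply]
      obtain ⟨h1, h2⟩ := h t
      funext i
      fin_cases i
      · show deriv α t * Real.cos s +
          (α t * Real.cos s * (β t - 1) - 0 * (α t * Real.sin s)) = -(α t * Real.cos s)
        rw [h1]; ring
      · show deriv α t * Real.sin s +
          (0 * (α t * Real.cos s) - -(α t * Real.sin s) * (β t - 1)) = -(α t * Real.sin s)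
        rw [h1]; ring
      · show deriv β t +
          (-(α t * Real.sin s) * (α t * Real.sin s) - α t * Real.cos s * (α t * Real.cos s)) = 0
        rw [h2]
        nlinarith [Real.sin_sq_add_cos_sq s]
  · -- Part 2: ODE system ↔ λ'' + e^{2λ} = 0
    intro hpos
    have hlog : ∀ u, deriv (fun u => Real.log (α u)) u = deriv α u / α u := by
      intro u
      exact (((hα u).hasDerivAt.log (hpos u).ne')).deriv
    have hexp : ∀ u, Real.exp (2 * Real.log (α u)) = α u ^ 2 := by
      intro u
      rw [two_mul, Real.exp_add, Real.exp_log (hpos u)]; ring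
    constructor
    · intro h t
      have hlogeq : deriv (fun u => Real.log (α u)) = fun u => -β u := by
        funext u
        rw [hlog u, (h u).1, neg_div, mul_div_assoc, div_self (hpos u).ne', mul_one]
      constructor
      · rw [hlogeq]; simp
      · rw [hlogeq]
        have : deriv (fun u => -β u) t = -deriv β t := deriv.neg
        rw [this, (h t).2, hexp t]
        ring
    · intro h t
      have hb : β = fun u => -deriv (fun u => Real.log (α u)) u := funext fun u => (h u).1
      have h1 : deriv α t = -(β t * α t) := by
        have := (h t).1
        rw [hlog t] at this
        rw [this, neg_mul, neg_neg, div_mul_eq_mul_div, mul_div_assoc, div_self (hpos t).ne', mul_one]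
      refine ⟨h1, ?_⟩
      have : deriv β t = -deriv (deriv (fun u => Real.log (α u))) t := by
        rw [hb]
        exact deriv.neg
      rw [this, ← hexp t]
      have := (h t).2
      linarith
end
end
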